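/- arXiv:2605.17296 — 2 statements merged into one kernel-verified Lean document; each statement's English description precedes it below -/
import Mathlib

section
/- Let E1, E2, E3 be i.i.d. Exp(1) random variables and x, y > 0. Then E[|x·E1 − E2| · |y·E1 − E3|] = 2xy − (x+y) + 2y²/((1+x)²(1+x+y)) + 2x²/((1+y)²(1+x+y)) + 1. -/
/-!
Conditionally on `E₁ = a`, the two factors are independent and each has mean `g(xa)`, resp.
`g(ya)`, where `g(t) = E|t - E| = t - 1 + 2e^{-t}` for `E ~ Exp(1)` and `t ≥ 0`. Hence the
expectation is `∫₀^∞ g(xa) g(ya) e^{-a} da`; expanding the product turns this into a linear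
combination of the Gamma integrals `∫₀^∞ aⁿ e^{-ca} da = n!/c^{n+1}`.
-/

open MeasureTheory ProbabilityTheory Real Set
open scoped ENNReal Nat

theorem integral_pow_mul_exp_neg_mul_Ioi (n : ℕ) {c : ℝ} (hc : 0 < c) :
    ∫ t in Ioi 0, t ^ n * exp (-(c * t)) = n ! / c ^ (n + 1) := by
  have h := integral_rpow_mul_exp_neg_mul_Ioi (a := n + 1) (by positivity) hc
  simp only [add_sub_cancel_right, rpow_natCast] at h
  rw [h, Gamma_nat_eq_factorial, ← Nat.cast_add_one, rpow_natCast, one_div, inv_pow]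
  field_simp

theorem integrableOn_pow_mul_exp_neg_mul_Ioi (n : ℕ) {c : ℝ} (hc : 0 < c) :
    IntegrableOn (fun t ↦ t ^ n * exp (-(c * t))) (Ioi 0) :=
  Integrable.of_integral_ne_zero <| by
    rw [integral_pow_mul_exp_neg_mul_Ioi n hc]; positivity

theorem integral_finsetSum_mul_pow_mul_exp_neg_mul_Ioi {ι : Type*} (s : Finset ι)
    (a c : ι → ℝ) (n : ι → ℕ) (hc : ∀ i ∈ s, 0 < c i) :
    ∫ t in Ioi 0, ∑ i ∈ s, a i * (t ^ n i * exp (-(c i * t)))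
      = ∑ i ∈ s, a i * (n i)! / c i ^ (n i + 1) := by
  rw [integral_finsetSum s fun i hi ↦
    (integrableOn_pow_mul_exp_neg_mul_Ioi _ (hc i hi)).const_mul _]
  refine Finset.sum_congr rfl fun i hi ↦ ?_
  rw [integral_const_mul, integral_pow_mul_exp_neg_mul_Ioi _ (hc i hi), mul_div_assoc]

theorem integrableOn_sub_mul_exp_neg_Ioi (t : ℝ) :
    IntegrableOn (fun b ↦ (b - t) * exp (-b)) (Ioi 0) := by
  have h1 := integrableOn_pow_mul_exp_neg_mul_Ioi 1 one_pos
  have h0 := (integrableOn_pow_mul_exp_neg_mul_Ioi 0 one_pos).const_mul t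
  refine (h1.sub h0).congr_fun (fun b _ ↦ ?_) measurableSet_Ioi
  simp only [Pi.sub_apply, pow_one, pow_zero, one_mul]
  ring

theorem integral_sub_mul_exp_neg_Ioi (t : ℝ) :
    ∫ b in Ioi 0, (b - t) * exp (-b) = 1 - t := by
  calc ∫ b in Ioi 0, (b - t) * exp (-b)
      = ∫ b in Ioi 0, (b ^ 1 * exp (-(1 * b)) - t * (b ^ 0 * exp (-(1 * b)))) :=
        setIntegral_congr_fun measurableSet_Ioi fun b _ ↦ by
          simp only [pow_one, pow_zero, one_mul]
          ring
    _ = 1 - t := by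
        rw [integral_sub (integrableOn_pow_mul_exp_neg_mul_Ioi 1 one_pos)
          ((integrableOn_pow_mul_exp_neg_mul_Ioi 0 one_pos).const_mul t), integral_const_mul,
          integral_pow_mul_exp_neg_mul_Ioi 1 one_pos, integral_pow_mul_exp_neg_mul_Ioi 0 one_pos]
        norm_num

theorem intervalIntegral_sub_mul_exp_neg (t : ℝ) :
    ∫ b in (0)..t, (t - b) * exp (-b) = t - 1 + exp (-t) := by
  have hF : ∀ b ∈ uIcc 0 t,
      HasDerivAt (fun b ↦ (b - t + 1) * exp (-b)) ((t - b) * exp (-b)) b := fun b _ ↦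
    ((((hasDerivAt_id' b).sub_const t).add_const 1).fun_mul (hasDerivAt_neg' b).exp).congr_deriv
      (by ring)
  rw [intervalIntegral.integral_eq_sub_of_hasDerivAt hF
    (by apply Continuous.intervalIntegrable; fun_prop)]
  simp only [sub_self, zero_add, one_mul, zero_sub, neg_zero, exp_zero, mul_one]
  ring

/-- `E|t - E|` for `E ~ Exp(1)`, when `t ≥ 0`. -/
noncomputable def meanAbsSubExp (t : ℝ) : ℝ := t - 1 + 2 * exp (-t)

theorem meanAbsSubExp_nonneg (t : ℝ) : 0 ≤ meanAbsSubExp t := by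
  unfold meanAbsSubExp
  linarith [add_one_le_exp (-t), exp_nonneg (-t)]

theorem integral_abs_sub_mul_exp_neg_Ioi {t : ℝ} (ht : 0 ≤ t) :
    ∫ b in Ioi 0, |t - b| * exp (-b) = meanAbsSubExp t := by
  have hint := integrableOn_sub_mul_exp_neg_Ioi t
  have hsplit : EqOn (fun b ↦ |t - b| * exp (-b))
      (fun b ↦ (b - t) * exp (-b) + 2 * (Ioc 0 t).indicator (fun b ↦ (t - b) * exp (-b)) b)
      (Ioi 0) := by
    intro b hb
    dsimp only
    by_cases hbt : b ≤ t
    · rw [indicator_of_mem (show b ∈ Ioc 0 t from ⟨hb, hbt⟩), abs_of_nonneg (sub_nonneg.2 hbt)]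
      ring
    · rw [indicator_of_notMem (show b ∉ Ioc 0 t from fun h ↦ hbt h.2),
        abs_of_neg (sub_neg.2 (not_le.1 hbt))]
      ring
  have hind : IntegrableOn ((Ioc 0 t).indicator fun b ↦ (t - b) * exp (-b)) (Ioi 0) :=
    (hint.neg.congr_fun (fun b _ ↦ by simp only [Pi.neg_apply]; ring) measurableSet_Ioi).indicator
      measurableSet_Ioc
  rw [setIntegral_congr_fun measurableSet_Ioi hsplit, integral_add hint (hind.const_mul 2),
    integral_const_mul, setIntegral_indicator measurableSet_Ioc,
    inter_eq_self_of_subset_right Ioc_subset_Ioi_self, ← intervalIntegral.integral_of_le ht,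
    integral_sub_mul_exp_neg_Ioi, intervalIntegral_sub_mul_exp_neg, meanAbsSubExp]
  ring

theorem integral_meanAbsSubExp_mul_meanAbsSubExp_mul_exp_neg_Ioi {x y : ℝ} (hx : 0 ≤ x)
    (hy : 0 ≤ y) :
    ∫ a in Ioi 0, meanAbsSubExp (x * a) * meanAbsSubExp (y * a) * exp (-a)
      = 2 * x * y - (x + y) + 2 * y ^ 2 / ((1 + x) ^ 2 * (1 + x + y))
        + 2 * x ^ 2 / ((1 + y) ^ 2 * (1 + x + y)) + 1 := by
  have h := integral_finsetSum_mul_pow_mul_exp_neg_mul_Ioi Finset.univ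
    ![x * y, -(x + y), 1, 2 * x, 2 * y, -2, -2, 4]
    ![1, 1, 1, 1 + y, 1 + x, 1 + x, 1 + y, 1 + x + y] ![2, 1, 0, 1, 1, 0, 0, 0]
    (fun i _ ↦ by fin_cases i <;> dsimp <;> positivity)
  simp only [Fin.sum_univ_eight, Matrix.cons_val, Nat.factorial_two, Nat.factorial_one,
    Nat.factorial_zero, Nat.cast_ofNat, Nat.cast_one] at h
  refine (setIntegral_congr_fun measurableSet_Ioi fun a _ ↦ ?_).trans (h.trans ?_)
  · have e : ∀ u, exp (-((1 + u) * a)) = exp (-(u * a)) * exp (-a) := fun u ↦ by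
      rw [← exp_add]; ring_nf
    have e' : exp (-((1 + x + y) * a)) = exp (-(x * a)) * exp (-(y * a)) * exp (-a) := by
      rw [← exp_add, ← exp_add]; ring_nf
    rw [meanAbsSubExp, meanAbsSubExp, e, e, e']
    simp only [one_mul]
    ring
  · field_simp
    ring

theorem lintegral_expMeasure (r : ℝ) (f : ℝ → ℝ≥0∞) :
    ∫⁻ a, f a ∂expMeasure r = ∫⁻ a in Ioi 0, ENNReal.ofReal (r * exp (-(r * a))) * f a := by
  change ∫⁻ a, f a ∂volume.withDensity (exponentialPDF r) = _
  rw [lintegral_withDensity_eq_lintegral_mul_non_measurable _ (f := exponentialPDF r)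
      (measurable_exponentialPDFReal r).ennreal_ofReal (ae_of_all _ fun _ ↦ ENNReal.ofReal_lt_top),
    Measure.restrict_congr_set Ioi_ae_eq_Ici, ← lintegral_indicator measurableSet_Ici]
  congr 1 with a
  by_cases ha : 0 ≤ a
  · simp [exponentialPDF_of_nonneg ha, ha]
  · simp [exponentialPDF_of_neg (not_le.1 ha), ha]

theorem lintegral_ofReal_abs_sub_expMeasure_one {t : ℝ} (ht : 0 ≤ t) :
    ∫⁻ b, ENNReal.ofReal |t - b| ∂expMeasure 1 = ENNReal.ofReal (meanAbsSubExp t) := by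
  have hint : IntegrableOn (fun b ↦ |t - b| * exp (-b)) (Ioi 0) :=
    IntegrableOn.congr_fun (integrableOn_sub_mul_exp_neg_Ioi t).abs
      (fun b _ ↦ by rw [abs_mul, abs_sub_comm, abs_of_pos (exp_pos _)]) measurableSet_Ioi
  rw [lintegral_expMeasure, ← integral_abs_sub_mul_exp_neg_Ioi ht,
    ofReal_integral_eq_lintegral_ofReal hint (ae_of_all _ fun b ↦ by positivity)]
  refine lintegral_congr fun b ↦ ?_
  rw [one_mul, one_mul, mul_comm, ENNReal.ofReal_mul (abs_nonneg _)]

theorem lintegral_mul_lintegral_abs_sub_expMeasure_one {x y : ℝ} (hx : 0 ≤ x) (hy : 0 ≤ y) :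
    ∫⁻ a, (∫⁻ b, ENNReal.ofReal |x * a - b| ∂expMeasure 1)
        * ∫⁻ c, ENNReal.ofReal |y * a - c| ∂expMeasure 1 ∂expMeasure 1
      = ∫⁻ a in Ioi 0,
          ENNReal.ofReal (meanAbsSubExp (x * a) * meanAbsSubExp (y * a) * exp (-a)) := by
  rw [lintegral_expMeasure]
  refine setLIntegral_congr_fun measurableSet_Ioi fun a (ha : 0 < a) ↦ ?_
  rw [lintegral_ofReal_abs_sub_expMeasure_one (mul_nonneg hx ha.le),
    lintegral_ofReal_abs_sub_expMeasure_one (mul_nonneg hy ha.le), one_mul, one_mul, mul_comm,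
    ← ENNReal.ofReal_mul (meanAbsSubExp_nonneg _),
    ← ENNReal.ofReal_mul (mul_nonneg (meanAbsSubExp_nonneg _) (meanAbsSubExp_nonneg _))]

theorem lintegral_prod_prod_mul {α β γ : Type*} [MeasurableSpace α] [MeasurableSpace β]
    [MeasurableSpace γ] {μ : Measure α} {ν : Measure β} {ρ : Measure γ} [SFinite ν] [SFinite ρ]
    {f : α × β → ℝ≥0∞} {g : α × γ → ℝ≥0∞} (hf : Measurable f) (hg : Measurable g) :
    ∫⁻ p, f (p.1, p.2.1) * g (p.1, p.2.2) ∂μ.prod (ν.prod ρ)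
      = ∫⁻ a, (∫⁻ b, f (a, b) ∂ν) * ∫⁻ c, g (a, c) ∂ρ ∂μ := by
  rw [lintegral_prod _ (by fun_prop)]
  exact lintegral_congr fun a ↦ lintegral_prod_mul (hf.comp measurable_prodMk_left).aemeasurable
    (hg.comp measurable_prodMk_left).aemeasurable

theorem map_prod_prod_eq_of_iIndepFun {Ω β : Type*} [MeasurableSpace Ω] [MeasurableSpace β]
    {P : Measure Ω} [IsFiniteMeasure P] {E : Fin 3 → Ω → β} (hm : ∀ i, Measurable (E i))
    (hind : iIndepFun E P) :
    P.map (fun ω ↦ (E 0 ω, E 1 ω, E 2 ω))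
      = (P.map (E 0)).prod ((P.map (E 1)).prod (P.map (E 2))) := by
  have h12 := (indepFun_iff_map_prod_eq_prod_map_map (hm 1).aemeasurable
    (hm 2).aemeasurable).1 (hind.indepFun (by decide))
  rw [(indepFun_iff_map_prod_eq_prod_map_map (hm 0).aemeasurable
    ((hm 1).prodMk (hm 2)).aemeasurable).1
      (hind.indepFun_prodMk hm 1 2 0 (by decide) (by decide)).symm, h12]

/-- If `E1, E2, E3` are i.i.d. Exp(1) random variables and `x, y > 0`, then
`E[|x·E1 − E2|·|y·E1 − E3|]
  = 2xy − (x+y) + 2y²/((1+x)²(1+x+y)) + 2x²/((1+y)²(1+x+y)) + 1`. -/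
theorem product_abs_exponential_expectation
    {Ω : Type*} [MeasureSpace Ω] [IsProbabilityMeasure (ℙ : Measure Ω)]
    (E : Fin 3 → Ω → ℝ) (hm : ∀ i, Measurable (E i))
    (hlaw : ∀ i, Measure.map (E i) ℙ = expMeasure 1)
    (hind : iIndepFun E ℙ)
    (x y : ℝ) (hx : 0 < x) (hy : 0 < y) :
    ∫ ω, |x * E 0 ω - E 1 ω| * |y * E 0 ω - E 2 ω| ∂ℙ
      = 2 * x * y - (x + y) + 2 * y ^ 2 / ((1 + x) ^ 2 * (1 + x + y))
        + 2 * x ^ 2 / ((1 + y) ^ 2 * (1 + x + y)) + 1 := by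
  set ν := expMeasure 1
  have : IsProbabilityMeasure ν := isProbabilityMeasure_expMeasure one_pos
  have hlaw3 : Measure.map (fun ω ↦ (E 0 ω, E 1 ω, E 2 ω)) ℙ = ν.prod (ν.prod ν) := by
    rw [map_prod_prod_eq_of_iIndepFun hm hind, hlaw, hlaw, hlaw]
  have hΦ : Measurable fun p : ℝ × ℝ × ℝ ↦ |x * p.1 - p.2.1| * |y * p.1 - p.2.2| := by fun_prop
  have hnonneg : ∀ a ∈ Ioi (0 : ℝ), 0 ≤ meanAbsSubExp (x * a) * meanAbsSubExp (y * a) * exp (-a) :=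
    fun a _ ↦ mul_nonneg (mul_nonneg (meanAbsSubExp_nonneg _) (meanAbsSubExp_nonneg _)) (exp_nonneg _)
  -- Tonelli for nonnegative integrands, so that no integrability has to be checked.
  calc ∫ ω, |x * E 0 ω - E 1 ω| * |y * E 0 ω - E 2 ω|
      = ∫ p, |x * p.1 - p.2.1| * |y * p.1 - p.2.2| ∂ν.prod (ν.prod ν) := by
        rw [← hlaw3, integral_map (by fun_prop) hΦ.aestronglyMeasurable]
    _ = (∫⁻ p, ENNReal.ofReal |x * p.1 - p.2.1| * ENNReal.ofReal |y * p.1 - p.2.2|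
          ∂ν.prod (ν.prod ν)).toReal := by
        rw [integral_eq_lintegral_of_nonneg_ae (ae_of_all _ fun p ↦ by positivity)
          hΦ.aestronglyMeasurable]
        simp_rw [ENNReal.ofReal_mul (abs_nonneg _)]
    _ = (∫⁻ a in Ioi 0,
          ENNReal.ofReal (meanAbsSubExp (x * a) * meanAbsSubExp (y * a) * exp (-a))).toReal := by
        rw [lintegral_prod_prod_mul (f := fun q ↦ ENNReal.ofReal |x * q.1 - q.2|)
          (g := fun q ↦ ENNReal.ofReal |y * q.1 - q.2|) (by fun_prop) (by fun_prop),
          lintegral_mul_lintegral_abs_sub_expMeasure_one hx.le hy.le]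
    _ = ∫ a in Ioi 0, meanAbsSubExp (x * a) * meanAbsSubExp (y * a) * exp (-a) :=
        (integral_eq_lintegral_of_nonneg_ae ((ae_restrict_iff' measurableSet_Ioi).2
          (ae_of_all _ hnonneg)) (by unfold meanAbsSubExp; fun_prop)).symm
    _ = _ := integral_meanAbsSubExp_mul_meanAbsSubExp_mul_exp_neg_Ioi hx.le hy.le
end

section
/- Let {a_{n,N} : N ≥ 1, 0 ≤ n ≤ N} be a triangular array of complex numbers and f : [0,1] → ℂ a function such that for every t ∈ [0,1] and every sequence (n_N) with 0 ≤ n_N ≤ N and n_N/N → t, one has a_{n_N, N} → f(t). Then f is continuous on [0,1] and (1/N)·Σ_{n=0}^{N−1} a_{n,N} → ∫₀¹ f(t) dt as N → ∞. -/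
/-!
Read the array as the step functions `x ↦ a_{⌊xN⌋,N}` on `[0, 1]`. Since a sequence with
`N_k → ∞` has a subsequence with strictly increasing `N_k`, which can be completed to a full
triangular sequence, the hypothesis upgrades to convergence along `atTop ×ˢ 𝓝 t`: the step
functions converge continuously to `f`. Continuous convergence makes `f` continuous and, by
compactness of `[0, 1]`, bounds the step functions uniformly for large `N`; dominated convergence
then passes to the limit in `∫₀¹`, and the integral of the `N`-th step function is exactly the
Cesàro mean.
-/

open Filter Topology Set Function

section Extend

variable {α β γ : Type*} {ψ : α → β} {u : α → γ} {w : β → γ}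

theorem Function.Injective.forall_extend (hψ : Injective ψ) {p : β → γ → Prop}
    (hu : ∀ k, p (ψ k) (u k)) (hw : ∀ x, p x (w x)) (x : β) : p x (extend ψ u w x) := by
  by_cases hx : ∃ k, ψ k = x
  · obtain ⟨k, rfl⟩ := hx
    simpa [hψ.extend_apply] using hu k
  · simpa [extend_apply' _ _ _ hx] using hw x

theorem Function.Injective.tendsto_cofinite_extend {δ : Type*} (hψ : Injective ψ)
    {F : β → γ → δ} {l : Filter δ} (hu : Tendsto (fun k => F (ψ k) (u k)) cofinite l)
    (hw : Tendsto (fun x => F x (w x)) cofinite l) :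
    Tendsto (fun x => F x (extend ψ u w x)) cofinite l := by
  intro s hs
  have hU : {k | F (ψ k) (u k) ∉ s}.Finite := hu hs
  have hW : {x | F x (w x) ∉ s}.Finite := hw hs
  refine ((hU.image ψ).union hW).subset fun x hx => ?_
  by_contra hmem
  refine hx (hψ.forall_extend (p := fun x y => x ∉ ψ '' _ ∪ _ → F x y ∈ s) ?_ ?_ x hmem)
  · exact fun k hk => not_not.1 fun hks => hk (Or.inl ⟨k, hks, rfl⟩)
  · exact fun x hx => not_not.1 fun hxs => hx (Or.inr hxs)

end Extend

section ContinuousConvergence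

variable {ι X E : Type*} [TopologicalSpace X] {p : Filter ι} {F : ι → X → E} {f : X → E}

theorem continuousOn_of_tendsto_uncurry [TopologicalSpace E] [RegularSpace E] [p.NeBot]
    {s : Set X} (hF : ∀ x ∈ s, Tendsto (uncurry F) (p ×ˢ 𝓝 x) (𝓝 (f x))) :
    ContinuousOn f s := by
  intro x hx
  refine (closed_nhds_basis (f x)).tendsto_right_iff.2 fun V ⟨hV, hVc⟩ => ?_
  obtain ⟨P, hP, U, hU, hPU⟩ := mem_prod_iff.1 (hF x hx hV)
  filter_upwards [inter_mem_nhdsWithin s hU] with y ⟨hys, hyU⟩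
  have hlim : Tendsto (F · y) p (𝓝 (f y)) :=
    (hF y hys).comp (f := fun i => (i, y)) (tendsto_id.prodMk tendsto_const_nhds)
  exact hVc.mem_of_tendsto hlim (eventually_of_mem hP fun i hi => hPU (mk_mem_prod hi hyU))

theorem IsCompact.exists_eventually_forall_norm_le [SeminormedAddGroup E] {K : Set X}
    (hK : IsCompact K) (hf : ContinuousOn f K)
    (hF : ∀ x ∈ K, Tendsto (uncurry F) (p ×ˢ 𝓝 x) (𝓝 (f x))) :
    ∃ C, ∀ᶠ i in p, ∀ x ∈ K, ‖F i x‖ ≤ C := by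
  obtain ⟨C, hC⟩ := hK.exists_bound_of_continuousOn hf
  have hnear : ∀ x ∈ K, ∀ᶠ q in p ×ˢ 𝓝 x, ‖uncurry F q‖ ≤ C + 1 := fun x hx =>
    ((hF x hx).norm.eventually (gt_mem_nhds (lt_add_one _))).mono fun q hq => by
      linarith [hC x hx]
  have hK' : ∀ᶠ q in p ×ˢ 𝓟 K, ‖uncurry F q‖ ≤ C + 1 :=
    Eventually.filter_mono (prod_mono le_rfl principal_le_nhdsSet)
      (hK.mem_prod_nhdsSet_of_forall hnear)
  exact ⟨C + 1, eventually_prod_principal_iff.1 hK'⟩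

end ContinuousConvergence

theorem abs_natFloor_mul_div_sub_le {c : ℝ} (hc : 0 ≤ c) {N : ℕ} (hN : N ≠ 0) :
    |(⌊c * N⌋₊ : ℝ) / N - c| ≤ 1 / N := by
  have hN' : (0 : ℝ) < N := by positivity
  have hle := Nat.floor_le (mul_nonneg hc hN'.le)
  have hlt := Nat.lt_floor_add_one (c * N)
  rw [div_sub' hN'.ne', abs_div, abs_of_pos hN', div_le_div_iff_of_pos_right hN', abs_le]
  constructor <;> linarith

section StepIntegral

open intervalIntegral

variable {E : Type*} [NormedAddCommGroup E] [NormedSpace ℝ E] [CompleteSpace E]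

theorem integral_comp_natFloor (g : ℕ → E) (N : ℕ) :
    ∫ y in (0 : ℝ)..N, g ⌊y⌋₊ = ∑ n ∈ Finset.range N, g n := by
  have hstep : ∀ n : ℕ,
      EqOn (fun _ => g n) (fun y : ℝ => g ⌊y⌋₊) (uIoo (n : ℝ) (n + 1 : ℕ)) := by
    intro n y hy
    rw [uIoo_of_le (by simp)] at hy
    simp [Nat.floor_eq_on_Ico n y ⟨hy.1.le, by exact_mod_cast hy.2⟩]
  have hint : ∀ n < N,
      IntervalIntegrable (fun y : ℝ => g ⌊y⌋₊) MeasureTheory.volume n (n + 1 : ℕ) :=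
    fun n _ => intervalIntegrable_const.congr_uIoo (hstep n)
  rw [← Nat.cast_zero, ← sum_integral_adjacent_intervals hint]
  refine Finset.sum_congr rfl fun n _ => ?_
  rw [← integral_congr_uIoo (hstep n), integral_const]
  simp

theorem integral_comp_natFloor_mul (g : ℕ → E) {N : ℕ} (hN : N ≠ 0) :
    ∫ x in (0 : ℝ)..1, g ⌊x * N⌋₊ = (N : ℝ)⁻¹ • ∑ n ∈ Finset.range N, g n := by
  rw [integral_comp_mul_right (fun y => g ⌊y⌋₊) (Nat.cast_ne_zero.2 hN), zero_mul, one_mul,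
    integral_comp_natFloor]

end StepIntegral

/-- Clamping `x` to `[0, 1]` keeps `gridIndex N x ≤ N` and `gridIndex N x / N → t` on a whole
neighbourhood of `t`, also at the endpoints. -/
noncomputable def gridIndex (N : ℕ) (x : ℝ) : ℕ :=
  ⌊(projIcc (0 : ℝ) 1 zero_le_one x : ℝ) * N⌋₊

theorem gridIndex_le (N : ℕ) (x : ℝ) : gridIndex N x ≤ N :=
  Nat.floor_le_of_le <| mul_le_of_le_one_left N.cast_nonneg (projIcc (0 : ℝ) 1 zero_le_one x).2.2

theorem gridIndex_of_mem {x : ℝ} (hx : x ∈ Icc (0 : ℝ) 1) (N : ℕ) :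
    gridIndex N x = ⌊x * N⌋₊ := by
  rw [gridIndex, projIcc_of_mem _ hx]

theorem tendsto_gridIndex_div {t : ℝ} (ht : t ∈ Icc (0 : ℝ) 1) :
    Tendsto (fun q : ℕ × ℝ => (gridIndex q.1 q.2 : ℝ) / q.1) (atTop ×ˢ 𝓝 t) (𝓝 t) := by
  have hclamp : Tendsto (fun q : ℕ × ℝ => (projIcc (0 : ℝ) 1 zero_le_one q.2 : ℝ))
      (atTop ×ˢ 𝓝 t) (𝓝 t) := by
    have h := (continuous_subtype_val.comp
      (continuous_projIcc (a := (0 : ℝ)) (b := 1) (h := zero_le_one))).tendsto t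
    rw [comp_apply, projIcc_of_mem _ ht] at h
    exact h.comp tendsto_snd
  refine hclamp.congr_dist (squeeze_zero' (Eventually.of_forall fun _ => dist_nonneg) ?_
    (tendsto_one_div_atTop_nhds_zero_nat.comp tendsto_fst))
  filter_upwards [tendsto_fst.eventually (eventually_ne_atTop 0)] with q hq
  rw [dist_comm, Real.dist_eq]
  exact abs_natFloor_mul_div_sub_le (projIcc (0 : ℝ) 1 zero_le_one q.2).2.1 hq

theorem integral_gridIndex {E : Type*} [NormedAddCommGroup E] [NormedSpace ℝ E] [CompleteSpace E]
    (a : ℕ → ℕ → E) {N : ℕ} (hN : N ≠ 0) :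
    ∫ x in (0 : ℝ)..1, a (gridIndex N x) N = (N : ℝ)⁻¹ • ∑ n ∈ Finset.range N, a n N := by
  rw [← integral_comp_natFloor_mul (a · N) hN]
  refine intervalIntegral.integral_congr fun x hx => ?_
  rw [uIcc_of_le zero_le_one] at hx
  simp only [gridIndex_of_mem hx]

def TriangularTendsto {E : Type*} [TopologicalSpace E] (a : ℕ → ℕ → E) (f : ℝ → E) : Prop :=
  ∀ t ∈ Icc (0 : ℝ) 1, ∀ n : ℕ → ℕ, (∀ N, n N ≤ N) →
    Tendsto (fun N => (n N : ℝ) / N) atTop (𝓝 t) → Tendsto (fun N => a (n N) N) atTop (𝓝 (f t))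

namespace TriangularTendsto

section Topological

variable {E : Type*} [TopologicalSpace E] {a : ℕ → ℕ → E} {f : ℝ → E} {t : ℝ}

theorem tendsto_comp_injective (h : TriangularTendsto a f) (ht : t ∈ Icc (0 : ℝ) 1)
    {ψ m : ℕ → ℕ} (hψ : Injective ψ) (hm : ∀ k, m k ≤ ψ k)
    (hmt : Tendsto (fun k => (m k : ℝ) / ψ k) atTop (𝓝 t)) :
    Tendsto (fun k => a (m k) (ψ k)) atTop (𝓝 (f t)) := by
  -- off the range of `ψ`, fill in the grid points `⌊tN⌋`
  have hn_le : ∀ N, extend ψ m (gridIndex · t) N ≤ N :=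
    hψ.forall_extend (p := fun N n => n ≤ N) hm (gridIndex_le · t)
  have hn : Tendsto (fun N => ((extend ψ m (gridIndex · t) N : ℕ) : ℝ) / N) atTop (𝓝 t) := by
    have hgrid : Tendsto (fun N => (gridIndex N t : ℝ) / N) atTop (𝓝 t) :=
      (tendsto_gridIndex_div ht).comp (f := fun N => (N, t)) (tendsto_id.prodMk tendsto_const_nhds)
    rw [← Nat.cofinite_eq_atTop] at hmt hgrid ⊢
    exact hψ.tendsto_cofinite_extend (u := m) (w := (gridIndex · t))
      (F := fun N n => (n : ℝ) / N) hmt hgrid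
  simpa [comp_def, hψ.extend_apply] using (h t ht _ hn_le hn).comp hψ.nat_tendsto_atTop

theorem tendsto_comp {ι : Type*} {l : Filter ι} [l.IsCountablyGenerated]
    (h : TriangularTendsto a f) (ht : t ∈ Icc (0 : ℝ) 1) {ψ m : ι → ℕ} (hψ : Tendsto ψ l atTop)
    (hm : ∀ i, m i ≤ ψ i) (hmt : Tendsto (fun i => (m i : ℝ) / ψ i) l (𝓝 t)) :
    Tendsto (fun i => a (m i) (ψ i)) l (𝓝 (f t)) := by
  refine tendsto_of_subseq_tendsto fun ns hns => ?_
  obtain ⟨φ, hφ, hψφ⟩ := strictMono_subseq_of_tendsto_atTop (hψ.comp hns)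
  exact ⟨φ, h.tendsto_comp_injective ht hψφ.injective (fun k => hm _)
    ((hmt.comp hns).comp hφ.tendsto_atTop)⟩

theorem tendsto_gridIndex (h : TriangularTendsto a f) (ht : t ∈ Icc (0 : ℝ) 1) :
    Tendsto (uncurry fun N x => a (gridIndex N x) N) (atTop ×ˢ 𝓝 t) (𝓝 (f t)) :=
  h.tendsto_comp ht tendsto_fst (fun q => gridIndex_le q.1 q.2) (tendsto_gridIndex_div ht)

theorem continuousOn [RegularSpace E] (h : TriangularTendsto a f) : ContinuousOn f (Icc 0 1) :=
  continuousOn_of_tendsto_uncurry fun _ ht => h.tendsto_gridIndex ht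

end Topological

open MeasureTheory in
theorem tendsto_integral {E : Type*} [NormedAddCommGroup E] [NormedSpace ℝ E]
    {a : ℕ → ℕ → E} {f : ℝ → E} (h : TriangularTendsto a f) :
    Tendsto (fun N => ∫ x in (0 : ℝ)..1, a (gridIndex N x) N) atTop
      (𝓝 (∫ x in (0 : ℝ)..1, f x)) := by
  obtain ⟨C, hC⟩ := isCompact_Icc.exists_eventually_forall_norm_le h.continuousOn
    fun _ ht => h.tendsto_gridIndex ht
  have hmeas : ∀ N, Measurable (gridIndex N) := fun N => Nat.measurable_floor.comp
    ((continuous_subtype_val.comp continuous_projIcc).measurable.mul_const _)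
  have hIoc : ∀ {x : ℝ}, x ∈ uIoc 0 1 → x ∈ Icc (0 : ℝ) 1 := fun hx =>
    Ioc_subset_Icc_self (by rwa [uIoc_of_le zero_le_one] at hx)
  refine intervalIntegral.tendsto_integral_filter_of_dominated_convergence (fun _ => C) ?_ ?_
    intervalIntegrable_const ?_
  · exact .of_forall fun N => ((StronglyMeasurable.of_discrete (f := (a · N))).comp_measurable
      (hmeas N)).aestronglyMeasurable
  · exact hC.mono fun N hN => ae_of_all _ fun x hx => hN x (hIoc hx)
  · exact ae_of_all _ fun x hx => (h.tendsto_gridIndex (hIoc hx)).comp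
      (f := fun N => (N, x)) (tendsto_id.prodMk tendsto_const_nhds)

end TriangularTendsto

/-- Cesàro mean lemma for triangular arrays: if `a_{n_N,N} → f(t)` whenever `n_N/N → t`,
then `f` is continuous on `[0,1]` and `(1/N)·Σ_{n<N} a_{n,N} → ∫₀¹ f`. -/
theorem cesaro_triangular_array (a : ℕ → ℕ → ℂ) (f : ℝ → ℂ)
    (h : ∀ t ∈ Set.Icc (0:ℝ) 1, ∀ n : ℕ → ℕ, (∀ N, n N ≤ N) →
      Tendsto (fun N => (n N : ℝ) / N) atTop (nhds t) →
      Tendsto (fun N => a (n N) N) atTop (nhds (f t))) :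
    ContinuousOn f (Set.Icc 0 1) ∧
    Tendsto (fun N : ℕ => (N : ℂ)⁻¹ * ∑ n ∈ Finset.range N, a n N) atTop
      (nhds (∫ t in (0:ℝ)..1, f t)) := by
  refine ⟨TriangularTendsto.continuousOn h, (TriangularTendsto.tendsto_integral h).congr' ?_⟩
  filter_upwards [eventually_ne_atTop 0] with N hN
  simp [integral_gridIndex a hN, Complex.real_smul]
end
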